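/- Let J_3(F_2) ⊆ M_3(F_2) be the space of lower triangular 3×3 matrices over F_2 with trace zero. Then J_3(F_2) is a 5-dimensional linear subspace all of whose elements are singular, and it contains exactly 5 matrices of rank 1. -/

import Mathlib

/-!
`J3` has `2 ^ 5 = 32` elements, hence dimension 5. A lower triangular matrix has determinant
`a * b * c` for its diagonal `(a, b, c)`, and trace zero over `F₂` forces `c = a + b`, so the
determinant is `a * b * (a + b) = 0`. Over a finite field with `q` elements the image of a matrix
of rank `r` has `q ^ r` elements, so rank one means an image of exactly two vectors, which is
checked on the 32 elements of `J3`.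
-/

/-- The space of lower triangular trace-zero `3 × 3` matrices over `F₂`. -/
def J3 : Submodule (ZMod 2) (Matrix (Fin 3) (Fin 3) (ZMod 2)) where
  carrier := {M | M 0 1 = 0 ∧ M 0 2 = 0 ∧ M 1 2 = 0 ∧ M.trace = 0}
  add_mem' := by
    rintro a b ⟨h1, h2, h3, h4⟩ ⟨g1, g2, g3, g4⟩
    refine ⟨?_, ?_, ?_, ?_⟩ <;>
      simp [Matrix.add_apply, h1, h2, h3, g1, g2, g3, h4, g4]
  zero_mem' := by simp
  smul_mem' := by
    rintro c a ⟨h1, h2, h3, h4⟩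
    refine ⟨?_, ?_, ?_, ?_⟩ <;> simp [Matrix.smul_apply, h1, h2, h3, h4]

namespace Matrix

variable {K m n : Type*} [Field K] [Fintype n]

theorem natCard_range_mulVec (A : Matrix m n K) :
    Nat.card (Set.range A.mulVec) = Nat.card K ^ A.rank := by
  rw [rank, ← Module.natCard_eq_pow_finrank]
  exact Nat.card_congr (Equiv.setCongr (LinearMap.coe_range A.mulVecLin)).symm

theorem rank_eq_iff_natCard_range_mulVec [Finite K] (A : Matrix m n K) (r : ℕ) :
    A.rank = r ↔ Nat.card (Set.range A.mulVec) = Nat.card K ^ r := by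
  rw [natCard_range_mulVec]
  exact (Nat.pow_right_injective Finite.one_lt_card).eq_iff.symm

end Matrix

theorem ZMod.mul_mul_add_eq_zero (a b : ZMod 2) : a * b * (a + b) = 0 := by
  revert a b
  decide

theorem mem_J3 {M : Matrix (Fin 3) (Fin 3) (ZMod 2)} :
    M ∈ J3 ↔ M 0 1 = 0 ∧ M 0 2 = 0 ∧ M 1 2 = 0 ∧ M.trace = 0 :=
  Iff.rfl

theorem natCard_J3 : Nat.card J3 = 32 := by
  rw [Nat.card_congr (Equiv.subtypeEquivRight fun _ => mem_J3), Nat.card_eq_fintype_card]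
  decide

theorem finrank_J3 : Module.finrank (ZMod 2) J3 = 5 := by
  have h := Module.natCard_eq_pow_finrank (K := ZMod 2) (V := J3)
  rw [natCard_J3, Nat.card_zmod] at h
  exact Nat.pow_right_injective le_rfl (h.symm.trans (by norm_num : 32 = 2 ^ 5))

theorem det_eq_zero_of_mem_J3 {M : Matrix (Fin 3) (Fin 3) (ZMod 2)} (hM : M ∈ J3) :
    M.det = 0 := by
  obtain ⟨h01, h02, h12, htr⟩ := mem_J3.mp hM
  rw [Matrix.trace_fin_three] at htr
  have h22 : M 2 2 = M 0 0 + M 1 1 := by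
    rw [eq_neg_of_add_eq_zero_right htr, ZMod.neg_eq_self_mod_two]
  rw [Matrix.det_fin_three, h01, h02, h12, h22]
  simpa using ZMod.mul_mul_add_eq_zero (M 0 0) (M 1 1)

set_option maxRecDepth 4000 in
theorem natCard_rank_eq_one_J3 :
    Nat.card {M : Matrix (Fin 3) (Fin 3) (ZMod 2) | M ∈ J3 ∧ M.rank = 1} = 5 := by
  have hset : {M : Matrix (Fin 3) (Fin 3) (ZMod 2) | M ∈ J3 ∧ M.rank = 1} =
      {M | (M 0 1 = 0 ∧ M 0 2 = 0 ∧ M 1 2 = 0 ∧ M.trace = 0) ∧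
        Fintype.card (Set.range M.mulVec) = 2} := by
    ext M
    simp only [Set.mem_ofPred_eq, mem_J3, Matrix.rank_eq_iff_natCard_range_mulVec,
      pow_one, Nat.card_eq_fintype_card, ZMod.card]
  rw [hset, Nat.card_eq_fintype_card]
  decide

theorem stmt_11 :
    Module.finrank (ZMod 2) J3 = 5 ∧
    (∀ M ∈ J3, ¬ IsUnit M) ∧
    Nat.card {M : Matrix (Fin 3) (Fin 3) (ZMod 2) | M ∈ J3 ∧ M.rank = 1} = 5 :=
  ⟨finrank_J3,
    fun M hM => by simp [Matrix.isUnit_iff_isUnit_det, det_eq_zero_of_mem_J3 hM],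
    natCard_rank_eq_one_J3⟩
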